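/- For every n ≥ 1 and every i with 1 ≤ i ≤ n one has τₙ ∘ δᵢ = δ_{i-1} ∘ τ_{n-1} as linear maps H^{⊗(n-1)} → H^{⊗n}. -/

import Mathlib

/-!
Let `H` be a Hopf algebra over `ℂ` with coproduct `Δ = Coalgebra.comul`, counit
`ε = Coalgebra.counit`, antipode `S = HopfAlgebra.antipode` and unit `1`.  We fix a
character `δ : H →ₐ[ℂ] ℂ`.  The `δ`-twisted antipode is the linear map
`S̃(h) = ∑ δ(h₍₁₎) S(h₍₂₎)`.
-/

open TensorProduct

noncomputable section

variable (H : Type) [Ring H] [HopfAlgebra ℂ H]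

/-- The `δ`-twisted antipode `S̃(h) = ∑ δ(h₍₁₎) S(h₍₂₎)`. -/
def twistedAntipode (δ : H →ₐ[ℂ] ℂ) : H →ₗ[ℂ] H :=
  (TensorProduct.lid ℂ H).toLinearMap ∘ₗ
    (TensorProduct.map δ.toLinearMap (HopfAlgebra.antipode (R := ℂ))) ∘ₗ
      Coalgebra.comul

/-- A type bundled with a `ℂ`-algebra structure (used to form iterated tensor powers). -/
structure AlgPack : Type 1 where
  carrier : Type
  [ring : Ring carrier]
  [alg : Algebra ℂ carrier]

attribute [instance] AlgPack.ring AlgPack.alg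

/-- The iterated tensor powers of `H`: `XB H n` bundles `H^{⊗(n+1)}` together with its
(componentwise) algebra structure coming from `Algebra.TensorProduct`. -/
def XB : ℕ → AlgPack
  | 0 => ⟨H⟩
  | n + 1 => ⟨H ⊗[ℂ] (XB n).carrier⟩

/-- `X H n` is the tensor power `H^{⊗(n+1)}`; its multiplication `*` is the componentwise
product and its unit `1` is `1 ⊗ ... ⊗ 1`. -/
abbrev X (n : ℕ) : Type := (XB H n).carrier

/-- The pure tensor `h 0 ⊗ h 1 ⊗ ... ⊗ h n ∈ H^{⊗(n+1)}`. -/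
def tp : ∀ n, (Fin (n + 1) → H) → X H n
  | 0, h => h 0
  | n + 1, h => h 0 ⊗ₜ[ℂ] tp n (Fin.tail h)

/-- The `n`-fold iterated coproduct `Δ⁽ⁿ⁾ : H →ₗ H^{⊗(n+1)}`. -/
def Δiter : ∀ n, H →ₗ[ℂ] X H n
  | 0 => LinearMap.id
  | n + 1 => (TensorProduct.map LinearMap.id (Δiter n)) ∘ₗ Coalgebra.comul

/-- The face operators `δᵢ : H^{⊗(n+1)} →ₗ H^{⊗(n+2)}` (`0 ≤ i ≤ n + 2`):
`δ₀ = 1 ⊗ ·`, `δⱼ` applies `Δ` to the `j`-th factor for `1 ≤ j ≤ n + 1`, and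
`δ_{n+2}` appends `1` on the right. -/
def dX : ℕ → ∀ n, X H n →ₗ[ℂ] X H (n + 1)
  | 0, n => TensorProduct.mk ℂ H (X H n) 1
  | 1, 0 => (Coalgebra.comul : H →ₗ[ℂ] H ⊗[ℂ] H)
  | 1, n + 1 => (TensorProduct.assoc ℂ H H (X H n)).toLinearMap ∘ₗ
      (TensorProduct.map Coalgebra.comul LinearMap.id)
  | _ + 2, 0 => (TensorProduct.mk ℂ H H).flip 1
  | i + 2, n + 1 => TensorProduct.map LinearMap.id (dX (i + 1) n)

/-- The degeneracy operators `σᵢ : H^{⊗(n+2)} →ₗ H^{⊗(n+1)}` (`0 ≤ i ≤ n + 1`):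
`σᵢ` applies the counit `ε` to the `(i+1)`-st factor. -/
def sX : ℕ → ∀ n, X H (n + 1) →ₗ[ℂ] X H n
  | 0, n => (TensorProduct.lid ℂ (X H n)).toLinearMap ∘ₗ
      TensorProduct.map Coalgebra.counit LinearMap.id
  | _ + 1, 0 => (TensorProduct.rid ℂ H).toLinearMap ∘ₗ
      TensorProduct.map LinearMap.id (Coalgebra.counit : H →ₗ[ℂ] ℂ)
  | i + 1, n + 1 => TensorProduct.map LinearMap.id (sX i n)

/-- Appending `1 ∈ H` on the right: `h¹ ⊗ ... ⊗ h^{n+1} ↦ h¹ ⊗ ... ⊗ h^{n+1} ⊗ 1`. -/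
def appOne : ∀ n, X H n →ₗ[ℂ] X H (n + 1)
  | 0 => (TensorProduct.mk ℂ H H).flip 1
  | n + 1 => TensorProduct.map LinearMap.id (appOne n)

/-- The cyclic operator `τₙ : H^{⊗n} →ₗ H^{⊗n}` (here at index `X H n = H^{⊗(n+1)}`):
`τ(h¹ ⊗ ... ⊗ h^{n+1}) = Δ⁽ⁿ⁾(S̃(h¹)) · (h² ⊗ ... ⊗ h^{n+1} ⊗ 1)`,
where `·` is the componentwise product of `H^{⊗(n+1)}`. -/
def tauX (δ : H →ₐ[ℂ] ℂ) : ∀ n, X H n →ₗ[ℂ] X H n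
  | 0 => twistedAntipode H δ
  | n + 1 => LinearMap.mul' ℂ (X H (n + 1)) ∘ₗ
      TensorProduct.map (Δiter H (n + 1) ∘ₗ twistedAntipode H δ) (appOne H n)

/-!
For `i ≥ 2` the face `δ_{i-1}` is an algebra map, it carries the iterated coproduct `Δ⁽ⁿ⁾` to
`Δ⁽ⁿ⁺¹⁾` (coassociativity) and commutes with appending `1`, so it passes through the product
`Δ⁽ⁿ⁾(S̃ h) · (u ⊗ 1)` defining `τ`. For `i = 1` everything reduces to the identity
`S̃(h₍₁₎)₍₁₎ h₍₂₎ ⊗ S̃(h₍₁₎)₍₂₎ = 1 ⊗ S̃(h)`. With `j₁ x = x ⊗ 1` and `j₂ x = 1 ⊗ x` it reads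
`(Δ ∘ S̃) ⋆ j₁ = j₂ ∘ S̃` in the convolution algebra of linear maps `H → H ⊗ H`, and it follows
from `S̃ = (η ∘ δ) ⋆ S`, `Δ ∘ (η ∘ δ) = j₂ ∘ (η ∘ δ)` and
`(Δ ∘ S) ⋆ j₁ = (Δ ∘ S) ⋆ (j₁ ⋆ j₂) ⋆ (j₂ ∘ S) = j₂ ∘ S`; here `j₂ ⋆ (j₂ ∘ S) = 1`,
`j₁ ⋆ j₂ = Δ`, and `Δ ∘ S` is the convolution inverse of `Δ`.
-/

section TensorProduct
variable {R M N P Q : Type*} [CommSemiring R] [AddCommMonoid M] [AddCommMonoid N]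
  [AddCommMonoid P] [AddCommMonoid Q] [Module R M] [Module R N] [Module R P] [Module R Q]

theorem assoc_comp_lTensor_tensor (f : P →ₗ[R] Q) :
    (TensorProduct.assoc R M N Q).toLinearMap ∘ₗ f.lTensor (M ⊗[R] N) =
      (f.lTensor N).lTensor M ∘ₗ (TensorProduct.assoc R M N P).toLinearMap :=
  TensorProduct.ext_threefold fun _ _ _ => rfl

variable (R M N) in
theorem assoc_comp_flip_mk (p : P) :
    (TensorProduct.assoc R M N P).toLinearMap ∘ₗ (TensorProduct.mk R (M ⊗[R] N) P).flip p =
      ((TensorProduct.mk R N P).flip p).lTensor M :=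
  TensorProduct.ext' fun _ _ => rfl

theorem lTensor_mul_tmul {C A B : Type*} [Semiring C] [Algebra R C] [Semiring A] [Algebra R A]
    [Semiring B] [Algebra R B] (f : A →ₗ[R] B) (t : C ⊗[R] A) (c : C) (v : B) :
    f.lTensor C t * (c ⊗ₜ v) = (LinearMap.mulRight R v ∘ₗ f).lTensor C (t * (c ⊗ₜ 1)) := by
  induction t using TensorProduct.induction_on with
  | zero => simp
  | tmul a b => simp
  | add x y hx hy => simp only [map_add, add_mul, hx, hy]

end TensorProduct

section Convolution
open WithConv Algebra.TensorProduct
variable {R A : Type*} [CommSemiring R] [Semiring A] [HopfAlgebra R A]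

theorem comul_antipode_convMul_comul :
    toConv (Coalgebra.comul ∘ₗ HopfAlgebra.antipode R (A := A)) * toConv Coalgebra.comul = 1 := by
  have h := LinearMap.algHom_comp_convMul_distrib (Bialgebra.comulAlgHom R A)
    (toConv (HopfAlgebra.antipode R)) (toConv LinearMap.id)
  rw [LinearMap.antipode_mul_id] at h
  apply WithConv.ofConv_injective
  refine h.symm.trans ?_
  ext a
  simp

theorem includeRight_convMul_includeRight_antipode :
    toConv (includeRight : A →ₐ[R] A ⊗[R] A).toLinearMap *
      toConv ((includeRight : A →ₐ[R] A ⊗[R] A).toLinearMap ∘ₗ HopfAlgebra.antipode R) = 1 := by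
  have h := LinearMap.algHom_comp_convMul_distrib (includeRight : A →ₐ[R] A ⊗[R] A)
    (toConv LinearMap.id) (toConv (HopfAlgebra.antipode R))
  rw [LinearMap.id_mul_antipode] at h
  apply WithConv.ofConv_injective
  refine h.symm.trans ?_
  ext a
  simp [Algebra.algebraMap_eq_smul_one, TensorProduct.smul_tmul', Algebra.TensorProduct.one_def]

theorem includeLeft_convMul_includeRight :
    toConv (includeLeft : A →ₐ[R] A ⊗[R] A).toLinearMap *
      toConv (includeRight : A →ₐ[R] A ⊗[R] A).toLinearMap = toConv Coalgebra.comul := by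
  have h : LinearMap.mul' R (A ⊗[R] A) ∘ₗ
      TensorProduct.map includeLeft.toLinearMap includeRight.toLinearMap = LinearMap.id := by
    ext a b
    simp
  rw [LinearMap.convMul_def, ofConv_toConv, ofConv_toConv, ← LinearMap.comp_assoc, h,
    LinearMap.id_comp]

theorem comul_antipode_convMul_includeLeft :
    toConv (Coalgebra.comul ∘ₗ HopfAlgebra.antipode R (A := A)) *
        toConv (includeLeft : A →ₐ[R] A ⊗[R] A).toLinearMap =
      toConv ((includeRight : A →ₐ[R] A ⊗[R] A).toLinearMap ∘ₗ HopfAlgebra.antipode R) := by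
  calc _ = toConv (Coalgebra.comul ∘ₗ HopfAlgebra.antipode R (A := A)) *
        toConv (includeLeft : A →ₐ[R] A ⊗[R] A).toLinearMap *
        (toConv (includeRight : A →ₐ[R] A ⊗[R] A).toLinearMap *
          toConv ((includeRight : A →ₐ[R] A ⊗[R] A).toLinearMap ∘ₗ HopfAlgebra.antipode R)) := by
        rw [includeRight_convMul_includeRight_antipode, mul_one]
    _ = toConv (Coalgebra.comul ∘ₗ HopfAlgebra.antipode R (A := A)) * toConv Coalgebra.comul *
          toConv ((includeRight : A →ₐ[R] A ⊗[R] A).toLinearMap ∘ₗ HopfAlgebra.antipode R) := by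
        rw [← includeLeft_convMul_includeRight, mul_assoc, mul_assoc, mul_assoc]
    _ = _ := by rw [comul_antipode_convMul_comul, one_mul]

theorem comul_comp_convMul_antipode_convMul_includeLeft (φ : A →ₗ[R] R) :
    toConv (Coalgebra.comul ∘ₗ
        (toConv (Algebra.linearMap R A ∘ₗ φ) * toConv (HopfAlgebra.antipode R)).ofConv) *
        toConv (includeLeft : A →ₐ[R] A ⊗[R] A).toLinearMap =
      toConv ((includeRight : A →ₐ[R] A ⊗[R] A).toLinearMap ∘ₗ
        (toConv (Algebra.linearMap R A ∘ₗ φ) * toConv (HopfAlgebra.antipode R)).ofConv) := by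
  have comul_unit : Coalgebra.comul ∘ₗ Algebra.linearMap R A ∘ₗ φ =
      (includeRight : A →ₐ[R] A ⊗[R] A).toLinearMap ∘ₗ Algebra.linearMap R A ∘ₗ φ := by
    ext a
    simp only [LinearMap.comp_apply, Algebra.linearMap_apply, Bialgebra.comul_algebraMap,
      AlgHom.toLinearMap_apply, AlgHom.commutes]
  have comul_convMul : toConv (Coalgebra.comul ∘ₗ
      (toConv (Algebra.linearMap R A ∘ₗ φ) * toConv (HopfAlgebra.antipode R)).ofConv) =
      toConv (Coalgebra.comul ∘ₗ Algebra.linearMap R A ∘ₗ φ) *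
        toConv (Coalgebra.comul ∘ₗ HopfAlgebra.antipode R (A := A)) :=
    congrArg toConv (LinearMap.algHom_comp_convMul_distrib (Bialgebra.comulAlgHom R A) _ _)
  have includeRight_convMul := congrArg toConv (LinearMap.algHom_comp_convMul_distrib
    (includeRight : A →ₐ[R] A ⊗[R] A) (toConv (Algebra.linearMap R A ∘ₗ φ))
      (toConv (HopfAlgebra.antipode R)))
  rw [comul_convMul, comul_unit, mul_assoc, comul_antipode_convMul_includeLeft,
    includeRight_convMul]

end Convolution

section TwistedAntipode
open WithConv

theorem twistedAntipode_eq_convMul (δ : H →ₐ[ℂ] ℂ) :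
    twistedAntipode H δ = (toConv (Algebra.linearMap ℂ H ∘ₗ δ.toLinearMap) *
      toConv (HopfAlgebra.antipode ℂ)).ofConv := by
  rw [twistedAntipode, LinearMap.convMul_def, ofConv_toConv, ← LinearMap.comp_assoc,
    ← LinearMap.comp_assoc]
  congr 1
  exact TensorProduct.ext' fun a b => by simp [Algebra.smul_def]

theorem mul'_comp_map_comul_twistedAntipode (δ : H →ₐ[ℂ] ℂ) :
    LinearMap.mul' ℂ (H ⊗[ℂ] H) ∘ₗ TensorProduct.map (Coalgebra.comul ∘ₗ twistedAntipode H δ)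
        ((TensorProduct.mk ℂ H H).flip 1) ∘ₗ Coalgebra.comul =
      TensorProduct.mk ℂ H H 1 ∘ₗ twistedAntipode H δ := by
  rw [twistedAntipode_eq_convMul]
  exact congrArg ofConv (comul_comp_convMul_antipode_convMul_includeLeft δ.toLinearMap)

end TwistedAntipode

section Faces
variable {H}

theorem Δiter_one : Δiter H 1 = Coalgebra.comul := by
  change TensorProduct.map LinearMap.id LinearMap.id ∘ₗ Coalgebra.comul = _
  rw [TensorProduct.map_id, LinearMap.id_comp]

theorem dX_one_comp_Δiter : ∀ n, dX H 1 n ∘ₗ Δiter H n = Δiter H (n + 1)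
  | 0 => by
    change Coalgebra.comul ∘ₗ LinearMap.id = Δiter H 1
    rw [LinearMap.comp_id, Δiter_one]
  | n + 1 => by
    change (TensorProduct.assoc ℂ H H (X H n)).toLinearMap ∘ₗ Coalgebra.comul.rTensor (X H n) ∘ₗ
        (Δiter H n).lTensor H ∘ₗ Coalgebra.comul =
      ((Δiter H n).lTensor H ∘ₗ Coalgebra.comul).lTensor H ∘ₗ Coalgebra.comul
    rw [← LinearMap.comp_assoc _ _ (Coalgebra.comul.rTensor _), LinearMap.rTensor_comp_lTensor,
      ← LinearMap.lTensor_comp_rTensor]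
    simp only [← LinearMap.comp_assoc]
    rw [assoc_comp_lTensor_tensor]
    simp only [LinearMap.comp_assoc]
    rw [Coalgebra.coassoc, ← LinearMap.comp_assoc, ← LinearMap.lTensor_comp]

theorem dX_comp_Δiter : ∀ j n, j ≤ n → dX H (j + 1) n ∘ₗ Δiter H n = Δiter H (n + 1)
  | 0, n, _ => dX_one_comp_Δiter n
  | j + 1, n + 1, hj => by
    change (dX H (j + 1) n).lTensor H ∘ₗ (Δiter H n).lTensor H ∘ₗ Coalgebra.comul =
      (Δiter H (n + 1)).lTensor H ∘ₗ Coalgebra.comul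
    rw [← LinearMap.comp_assoc, ← LinearMap.lTensor_comp, dX_comp_Δiter j n (by omega)]

theorem appOne_comp_dX : ∀ j n, j ≤ n + 1 →
    appOne H (n + 1) ∘ₗ dX H (j + 1) n = dX H (j + 1) (n + 1) ∘ₗ appOne H n
  | 0, 0, _ => by
    refine LinearMap.ext fun h => ?_
    change (appOne H 0).lTensor H (Coalgebra.comul h) =
      TensorProduct.assoc ℂ H H H (Coalgebra.comul h ⊗ₜ (1 : H))
    exact (LinearMap.congr_fun (assoc_comp_flip_mk ℂ H H (1 : H)) (Coalgebra.comul h)).symm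
  | 0, n + 1, _ => by
    change ((appOne H n).lTensor H).lTensor H ∘ₗ
        (TensorProduct.assoc ℂ H H (X H n)).toLinearMap ∘ₗ Coalgebra.comul.rTensor (X H n) =
      (TensorProduct.assoc ℂ H H (X H (n + 1))).toLinearMap ∘ₗ
        Coalgebra.comul.rTensor (X H (n + 1)) ∘ₗ (appOne H n).lTensor H
    rw [← LinearMap.comp_assoc, ← assoc_comp_lTensor_tensor, LinearMap.comp_assoc,
      LinearMap.lTensor_comp_rTensor, LinearMap.rTensor_comp_lTensor]
  | j + 1, 0, hj => by
    obtain rfl : j = 0 := by omega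
    ext h
    change h ⊗ₜ[ℂ] ((1 : H) ⊗ₜ[ℂ] (1 : H)) = h ⊗ₜ[ℂ] Coalgebra.comul (1 : H)
    rw [Bialgebra.comul_one, Algebra.TensorProduct.one_def]
  | j + 1, n + 1, hj => by
    change (appOne H (n + 1)).lTensor H ∘ₗ (dX H (j + 1) n).lTensor H =
      (dX H (j + 1) (n + 1)).lTensor H ∘ₗ (appOne H n).lTensor H
    rw [← LinearMap.lTensor_comp, ← LinearMap.lTensor_comp, appOne_comp_dX j n (by omega)]

def faceAlgHom : ℕ → ∀ n, X H n →ₐ[ℂ] X H (n + 1)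
  | 0, _ => Algebra.TensorProduct.includeRight
  | 1, 0 => Bialgebra.comulAlgHom ℂ H
  | 1, n + 1 => (Algebra.TensorProduct.assoc ℂ ℂ ℂ H H (X H n)).toAlgHom.comp
      (Algebra.TensorProduct.map (Bialgebra.comulAlgHom ℂ H) (AlgHom.id ℂ (X H n)))
  | _ + 2, 0 => Algebra.TensorProduct.includeLeft (R := ℂ) (S := ℂ) (A := H) (B := H)
  | i + 2, n + 1 => Algebra.TensorProduct.map (AlgHom.id ℂ H) (faceAlgHom (i + 1) n)

theorem toLinearMap_faceAlgHom : ∀ i n, (faceAlgHom i n).toLinearMap = dX H i n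
  | 0, _ => rfl
  | 1, 0 => rfl
  | 1, _ + 1 => rfl
  | _ + 2, 0 => LinearMap.ext fun _ => rfl
  | i + 2, n + 1 => by
    change (Algebra.TensorProduct.map (AlgHom.id ℂ H) (faceAlgHom (i + 1) n)).toLinearMap =
      (dX H (i + 1) n).lTensor H
    rw [← toLinearMap_faceAlgHom]
    exact TensorProduct.ext' fun _ _ => rfl

theorem dX_mul (i n : ℕ) (x y : X H n) : dX H i n (x * y) = dX H i n x * dX H i n y := by
  rw [← toLinearMap_faceAlgHom, AlgHom.toLinearMap_apply, map_mul]
  rfl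

end Faces

section Cyclic
variable {H} (δ : H →ₐ[ℂ] ℂ)

theorem tauX_succ_tmul (n : ℕ) (h : H) (u : X H n) :
    tauX H δ (n + 1) (h ⊗ₜ u) = Δiter H (n + 1) (twistedAntipode H δ h) * appOne H n u := rfl

theorem tauX_comp_dX_add_two (j n : ℕ) (hj : j ≤ n + 1) :
    tauX H δ (n + 2) ∘ₗ dX H (j + 2) (n + 1) = dX H (j + 1) (n + 1) ∘ₗ tauX H δ (n + 1) :=
  TensorProduct.ext' fun h u => by
    change tauX H δ (n + 2) (h ⊗ₜ dX H (j + 1) n u) =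
      dX H (j + 1) (n + 1) (tauX H δ (n + 1) (h ⊗ₜ u))
    rw [tauX_succ_tmul, tauX_succ_tmul, dX_mul, ← LinearMap.comp_apply (dX H (j + 1) (n + 1)),
      dX_comp_Δiter j (n + 1) (by omega), ← LinearMap.comp_apply (dX H (j + 1) (n + 1)),
      ← appOne_comp_dX j n hj]
    rfl

theorem tauX_comp_dX_two_zero : tauX H δ 1 ∘ₗ dX H 2 0 = dX H 1 0 ∘ₗ tauX H δ 0 := by
  refine LinearMap.ext fun h => ?_
  change (Δiter H 1 (twistedAntipode H δ h) * 1 : X H 1) = dX H 1 0 (twistedAntipode H δ h)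
  rw [mul_one, Δiter_one]
  rfl

theorem tauX_comp_dX_one_zero : tauX H δ 1 ∘ₗ dX H 1 0 = dX H 0 0 ∘ₗ tauX H δ 0 := by
  change LinearMap.mul' ℂ (H ⊗[ℂ] H) ∘ₗ TensorProduct.map (Δiter H 1 ∘ₗ twistedAntipode H δ)
      ((TensorProduct.mk ℂ H H).flip 1) ∘ₗ Coalgebra.comul =
    TensorProduct.mk ℂ H H 1 ∘ₗ twistedAntipode H δ
  rw [Δiter_one, mul'_comp_map_comul_twistedAntipode]

theorem tauX_comp_assoc_comp_flip_mk (n : ℕ) (u : X H n) :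
    tauX H δ (n + 2) ∘ₗ (TensorProduct.assoc ℂ H H (X H n)).toLinearMap ∘ₗ
        (TensorProduct.mk ℂ (H ⊗[ℂ] H) (X H n)).flip u =
      (LinearMap.mulRight ℂ (appOne H n u) ∘ₗ Δiter H (n + 1)).lTensor H ∘ₗ
        LinearMap.mul' ℂ (H ⊗[ℂ] H) ∘ₗ TensorProduct.map (Coalgebra.comul ∘ₗ twistedAntipode H δ)
          ((TensorProduct.mk ℂ H H).flip 1) :=
  TensorProduct.ext' fun a b =>
    lTensor_mul_tmul (Δiter H (n + 1)) (Coalgebra.comul (twistedAntipode H δ a)) b (appOne H n u)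

theorem tauX_comp_dX_one_succ (n : ℕ) :
    tauX H δ (n + 2) ∘ₗ dX H 1 (n + 1) = dX H 0 (n + 1) ∘ₗ tauX H δ (n + 1) :=
  TensorProduct.ext' fun h u => by
    refine (LinearMap.congr_fun (tauX_comp_assoc_comp_flip_mk δ n u) (Coalgebra.comul h)).trans ?_
    exact congrArg ((LinearMap.mulRight ℂ (appOne H n u) ∘ₗ Δiter H (n + 1)).lTensor H)
      (LinearMap.congr_fun (mul'_comp_map_comul_twistedAntipode H δ) h)

end Cyclic

/-- For every `n ≥ 1` and every `i` with `1 ≤ i ≤ n` one has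
`τₙ ∘ δᵢ = δ_{i-1} ∘ τ_{n-1}` as linear maps `H^{⊗(n-1)} → H^{⊗n}` (here `n = m + 2`,
`H^{⊗(n-1)} = X H m`, `H^{⊗n} = X H (m+1)`). -/
theorem tauX_comp_d (δ : H →ₐ[ℂ] ℂ) :
    ∀ (m i : ℕ), 1 ≤ i → i ≤ m + 2 →
      tauX H δ (m + 1) ∘ₗ dX H i m = dX H (i - 1) m ∘ₗ tauX H δ m := by
  intro m i h1 h2
  match i, h1, m with
  | 1, _, 0 => exact tauX_comp_dX_one_zero δ
  | 1, _, n + 1 => exact tauX_comp_dX_one_succ δ n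
  | j + 2, _, 0 =>
    obtain rfl : j = 0 := by omega
    exact tauX_comp_dX_two_zero δ
  | j + 2, _, n + 1 => exact tauX_comp_dX_add_two δ j n (by omega)
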